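/- Let P ⊆ ℝ^d be a full-dimensional lattice polytope with codegree a. If P is nearly Gorenstein, then P = ⌊aP⌋ + {P}, i.e. P is the Minkowski sum of the floor polytope of aP and the remainder polytope of P. -/

import Mathlib

/-!
Write a lattice point `x ∈ P` as `(x, 1) = (p, k) + (q, l)` with `(p, k) ∈ int(C_P)` and
`(q, l) ∈ ant(C_P)` lattice points. As `P` is bounded and not a point, the only point of `C_P`
at height `≤ 0` is the apex, so `k > 0`, and then `k ≥ a` by minimality of the codegree.
If `k = a` then `p ∈ ⌊aP⌋` and `q ∈ {P}`. If `k > a`, adding a lattice point `(w, a)` of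
`int(C_P)` to `(q, l)` lands in `C_P` at height `a + l ≤ 0`, so `q = -w`, `l = -a`, and
`x = w + (x + q)` with `x + q ∈ {P}`. Conversely `⌊aP⌋ + {P} ⊆ P` because lattice points `y` of
`int(aP)` satisfy `n_F(y) ≥ -a h_F + 1`.
-/

open Set Pointwise

/-- The set of lattice points of `ℝ^d`. -/
def latticePoints (d : ℕ) : Set (Fin d → ℝ) :=
  {x | ∀ i, ∃ z : ℤ, x i = (z : ℝ)}

/-- A lattice polytope: the convex hull of a finite set of lattice points. -/
def IsLatticePolytope {d : ℕ} (P : Set (Fin d → ℝ)) : Prop :=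
  ∃ V : Finset (Fin d → ℝ), (V : Set (Fin d → ℝ)) ⊆ latticePoints d ∧
    P = convexHull ℝ (V : Set (Fin d → ℝ))

/-- The natural pairing of an integral linear functional with a point of `ℝ^d`. -/
def pairing {d : ℕ} (n : Fin d → ℤ) (x : Fin d → ℝ) : ℝ :=
  ∑ i, (n i : ℝ) * x i

/-- `P = {x | n_F(x) ≥ -h_F}` is an irredundant presentation with primitive
integral inner normals, i.e. the facet presentation of `P`. -/
def IsFacetPresentation {d m : ℕ} (P : Set (Fin d → ℝ))
    (n : Fin m → Fin d → ℤ) (h : Fin m → ℤ) : Prop :=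
  P = {x | ∀ i, pairing (n i) x ≥ -(h i : ℝ)} ∧
  (∀ i, Finset.univ.gcd (n i) = 1) ∧
  (∀ i, ∃ x : Fin d → ℝ, pairing (n i) x < -(h i : ℝ) ∧
    ∀ j, j ≠ i → pairing (n j) x ≥ -(h j : ℝ))

/-- `a` is the codegree of `P`: the least `k ≥ 1` such that `int(kP)` contains
a lattice point. -/
def IsCodegree {d : ℕ} (P : Set (Fin d → ℝ)) (a : ℕ) : Prop :=
  1 ≤ a ∧ (interior ((a : ℝ) • P) ∩ latticePoints d).Nonempty ∧
    ∀ k : ℕ, 1 ≤ k → (interior ((k : ℝ) • P) ∩ latticePoints d).Nonempty → a ≤ k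

/-- The floor polytope `⌊R⌋ = conv(int(R) ∩ ℤ^d)`. -/
def floorPoly {d : ℕ} (R : Set (Fin d → ℝ)) : Set (Fin d → ℝ) :=
  convexHull ℝ (interior R ∩ latticePoints d)

/-- The remainder polytope `{P} = conv{x ∈ ℤ^d | n_F(x) ≥ (a-1)h_F - 1}`,
defined in terms of the facet presentation data and the codegree `a`. -/
def remPoly {d m : ℕ} (n : Fin m → Fin d → ℤ) (h : Fin m → ℤ) (a : ℕ) :
    Set (Fin d → ℝ) :=
  convexHull ℝ {x | x ∈ latticePoints d ∧
    ∀ i, pairing (n i) x ≥ ((a : ℝ) - 1) * (h i : ℝ) - 1}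

/-- The cone `C_P ⊆ ℝ^d × ℝ` over `P`, in terms of the facet presentation. -/
def coneOver {d m : ℕ} (n : Fin m → Fin d → ℤ) (h : Fin m → ℤ) :
    Set ((Fin d → ℝ) × ℝ) :=
  {p | ∀ i, pairing (n i) p.1 ≥ -(p.2 * (h i : ℝ))}

/-- The interior `int(C_P)` of the cone over `P`. -/
def intCone {d m : ℕ} (n : Fin m → Fin d → ℤ) (h : Fin m → ℤ) :
    Set ((Fin d → ℝ) × ℝ) :=
  {p | ∀ i, pairing (n i) p.1 > -(p.2 * (h i : ℝ))}

/-- The anticanonical set `ant(C_P)` of the cone over `P`. -/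
def antCone {d m : ℕ} (n : Fin m → Fin d → ℤ) (h : Fin m → ℤ) :
    Set ((Fin d → ℝ) × ℝ) :=
  {p | ∀ i, pairing (n i) p.1 ≥ -(p.2 * (h i : ℝ)) - 1}

/-- Lattice points of `ℝ^d × ℝ = ℝ^{d+1}`. -/
def latticePairs (d : ℕ) : Set ((Fin d → ℝ) × ℝ) :=
  {p | p.1 ∈ latticePoints d ∧ ∃ z : ℤ, p.2 = (z : ℝ)}

/-- The nearly Gorenstein condition with respect to a given facet presentation:
`(C_P ∩ ℤ^{d+1}) \ {0} ⊆ (int(C_P) ∩ ℤ^{d+1}) + (ant(C_P) ∩ ℤ^{d+1})`. -/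
def NGIncl {d m : ℕ} (n : Fin m → Fin d → ℤ) (h : Fin m → ℤ) : Prop :=
  (coneOver n h ∩ latticePairs d) \ {(0 : (Fin d → ℝ) × ℝ)} ⊆
    (intCone n h ∩ latticePairs d) + (antCone n h ∩ latticePairs d)

/-- A full-dimensional lattice polytope is nearly Gorenstein if the nearly
Gorenstein inclusion holds for its facet presentation. -/
def NearlyGorenstein {d : ℕ} (P : Set (Fin d → ℝ)) : Prop :=
  ∃ (m : ℕ) (n : Fin m → Fin d → ℤ) (h : Fin m → ℤ),
    IsFacetPresentation P n h ∧ NGIncl n h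

/-- The polar dual `Q* = {y | y(x) ≥ -1 for all x ∈ Q}`. -/
def polarDual {d : ℕ} (Q : Set (Fin d → ℝ)) : Set (Fin d → ℝ) :=
  {y | ∀ x ∈ Q, (∑ i, y i * x i) ≥ -1}

/-- A reflexive polytope: a lattice polytope with `0` in its interior whose
polar dual is again a lattice polytope. -/
def IsReflexive {d : ℕ} (Q : Set (Fin d → ℝ)) : Prop :=
  IsLatticePolytope Q ∧ (0 : Fin d → ℝ) ∈ interior Q ∧
    IsLatticePolytope (polarDual Q)

/-- A Gorenstein polytope: some dilate `kP`, translated by a lattice vector,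
is reflexive. -/
def IsGorenstein {d : ℕ} (P : Set (Fin d → ℝ)) : Prop :=
  ∃ (k : ℕ) (w : Fin d → ℝ), 1 ≤ k ∧ w ∈ latticePoints d ∧
    IsReflexive ((fun x => x - w) '' ((k : ℝ) • P))

/-- The integer decomposition property. -/
def IsIDP {d : ℕ} (P : Set (Fin d → ℝ)) : Prop :=
  ∀ k : ℕ, 1 ≤ k → ∀ x ∈ ((k : ℝ) • P) ∩ latticePoints d,
    ∃ y : Fin k → Fin d → ℝ, (∀ j, y j ∈ P ∩ latticePoints d) ∧ x = ∑ j, y j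

/-- Minkowski indecomposability of a lattice polytope. -/
def IsIndecomposable {d : ℕ} (P : Set (Fin d → ℝ)) : Prop :=
  (¬ ∃ p : Fin d → ℝ, P = {p}) ∧
  ∀ P₁ P₂ : Set (Fin d → ℝ), IsLatticePolytope P₁ → IsLatticePolytope P₂ →
    P = P₁ + P₂ → (∃ p, P₁ = {p}) ∨ (∃ p, P₂ = {p})

/-- A `(0,1)`-polytope: the convex hull of a set of `(0,1)`-vectors. -/
def Is01Polytope {d : ℕ} (P : Set (Fin d → ℝ)) : Prop :=
  ∃ V : Finset (Fin d → ℝ), (∀ v ∈ V, ∀ i, v i = 0 ∨ v i = 1) ∧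
    P = convexHull ℝ (V : Set (Fin d → ℝ))

variable {d m : ℕ}

lemma pairing_eq_dotProduct (nn : Fin d → ℤ) (x : Fin d → ℝ) :
    pairing nn x = (fun i => (nn i : ℝ)) ⬝ᵥ x := rfl

lemma pairing_add (nn : Fin d → ℤ) (x y : Fin d → ℝ) :
    pairing nn (x + y) = pairing nn x + pairing nn y := by
  simp only [pairing_eq_dotProduct, dotProduct_add]

lemma pairing_sub (nn : Fin d → ℤ) (x y : Fin d → ℝ) :
    pairing nn (x - y) = pairing nn x - pairing nn y := by
  simp only [pairing_eq_dotProduct, dotProduct_sub]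

lemma pairing_smul (nn : Fin d → ℤ) (c : ℝ) (x : Fin d → ℝ) :
    pairing nn (c • x) = c * pairing nn x := by
  simp only [pairing_eq_dotProduct, dotProduct_smul, smul_eq_mul]

lemma exists_int_pairing_eq (nn : Fin d → ℤ) {x : Fin d → ℝ} (hx : x ∈ latticePoints d) :
    ∃ z : ℤ, pairing nn x = z := by
  choose z hz using hx
  exact ⟨∑ i, nn i * z i, by simp [pairing, hz]⟩

lemma add_mem_latticePoints {x y : Fin d → ℝ} (hx : x ∈ latticePoints d)
    (hy : y ∈ latticePoints d) : x + y ∈ latticePoints d := fun i => by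
  obtain ⟨a, ha⟩ := hx i
  obtain ⟨b, hb⟩ := hy i
  exact ⟨a + b, by simp [ha, hb]⟩

lemma add_mem_latticePairs {p q : (Fin d → ℝ) × ℝ} (hp : p ∈ latticePairs d)
    (hq : q ∈ latticePairs d) : p + q ∈ latticePairs d := by
  obtain ⟨hp₁, a, ha⟩ := hp
  obtain ⟨hq₁, b, hb⟩ := hq
  exact ⟨add_mem_latticePoints hp₁ hq₁, a + b, by simp [ha, hb]⟩

def pairingCLM (nn : Fin d → ℤ) : (Fin d → ℝ) →L[ℝ] ℝ :=
  ∑ i, (nn i : ℝ) • ContinuousLinearMap.proj i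

lemma pairingCLM_apply (nn : Fin d → ℤ) (x : Fin d → ℝ) :
    pairingCLM nn x = pairing nn x := by
  simp [pairingCLM, pairing]

lemma pairingCLM_surjective {nn : Fin d → ℤ} (hnn : nn ≠ 0) :
    Function.Surjective (pairingCLM nn) := by
  obtain ⟨j, hj⟩ := Function.ne_iff.mp hnn
  have hj' : (nn j : ℝ) ≠ 0 := by exact_mod_cast hj
  intro r
  refine ⟨Pi.single j (r / nn j), ?_⟩
  rw [pairingCLM_apply, pairing_eq_dotProduct, dotProduct_single, mul_div_cancel₀ _ hj']

lemma interior_setOf_forall_le_pairing {n : Fin m → Fin d → ℤ} (hn : ∀ i, n i ≠ 0)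
    (c : Fin m → ℝ) :
    interior {x | ∀ i, c i ≤ pairing (n i) x} = {x | ∀ i, c i < pairing (n i) x} := by
  have hpre : ∀ i, {x | c i ≤ pairing (n i) x} = pairingCLM (n i) ⁻¹' Ici (c i) := fun i => by
    ext x; simp [pairingCLM_apply]
  rw [ofPred_forall, interior_iInter_of_finite, ofPred_forall]
  refine iInter_congr fun i => ?_
  rw [hpre, ContinuousLinearMap.interior_preimage _ (pairingCLM_surjective (hn i)),
    interior_Ici]
  ext x; simp [pairingCLM_apply]

lemma ne_zero_of_gcd_eq_one {nn : Fin d → ℤ} (h : Finset.univ.gcd nn = 1) : nn ≠ 0 := by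
  rintro rfl
  simp [Finset.gcd_eq_zero_iff.mpr] at h

lemma Set.nontrivial_of_nonempty_interior {E : Type*} [NormedAddCommGroup E] [NormedSpace ℝ E]
    [Nontrivial E] {s : Set E} (hs : (interior s).Nonempty) : s.Nontrivial := by
  by_contra hnt
  rcases (not_nontrivial_iff.mp hnt).eq_empty_or_singleton with rfl | ⟨x, rfl⟩
  · simp at hs
  · simp [interior_singleton] at hs

lemma eq_zero_of_forall_add_smul_mem {E : Type*} [NormedAddCommGroup E] [NormedSpace ℝ E]
    {s : Set E} (hs : Bornology.IsBounded s) {p v : E}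
    (hray : ∀ t : ℝ, 0 ≤ t → p + t • v ∈ s) : v = 0 := by
  obtain ⟨R, hR⟩ := isBounded_iff_forall_norm_le.mp hs
  by_contra hv
  have hv' : 0 < ‖v‖ := norm_pos_iff.mpr hv
  have hpR : ‖p‖ ≤ R := by simpa using hR _ (hray 0 le_rfl)
  set t := (R + ‖p‖ + 1) / ‖v‖
  have ht : 0 ≤ t := div_nonneg (by linarith [norm_nonneg p]) hv'.le
  have htv : ‖t • v‖ = R + ‖p‖ + 1 := by
    rw [norm_smul, Real.norm_of_nonneg ht, div_mul_cancel₀ _ hv'.ne']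
  have := norm_sub_le (p + t • v) p
  rw [add_sub_cancel_left, htv] at this
  linarith [hR _ (hray t ht)]

section Cone

variable {n : Fin m → Fin d → ℤ} {h : Fin m → ℤ}

lemma add_one_le_pairing_of_mem_intCone {w : Fin d → ℝ} {k : ℝ}
    (hw : (w, k) ∈ intCone n h ∩ latticePairs d) (i : Fin m) :
    -(k * h i) + 1 ≤ pairing (n i) w := by
  obtain ⟨hwint, hwlat, z, rfl⟩ := hw
  obtain ⟨y, hy⟩ := exists_int_pairing_eq (n i) hwlat
  have hlt : -(z * h i) < y := by
    have := hwint i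
    dsimp only at this
    rw [hy] at this
    exact_mod_cast this
  rw [hy]
  exact_mod_cast hlt

lemma intCone_inter_latticePairs_add_antCone_subset :
    (intCone n h ∩ latticePairs d) + antCone n h ⊆ coneOver n h := by
  rintro _ ⟨⟨w, k⟩, hw, ⟨q, l⟩, hq, rfl⟩ i
  have := add_one_le_pairing_of_mem_intCone hw i
  have := hq i
  simp only [Prod.fst_add, Prod.snd_add, pairing_add] at *
  linarith

lemma coneOver_add_antCone_subset : coneOver n h + antCone n h ⊆ antCone n h := by
  rintro _ ⟨⟨x, k⟩, hx, ⟨q, l⟩, hq, rfl⟩ i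
  have := hx i
  have := hq i
  simp only [Prod.fst_add, Prod.snd_add, pairing_add] at *
  linarith

lemma mem_antCone_one_sub_iff {z : Fin d → ℝ} {a : ℝ} :
    (z, 1 - a) ∈ antCone n h ↔ ∀ i, pairing (n i) z ≥ (a - 1) * h i - 1 := by
  refine forall_congr' fun i => ?_
  rw [show -((1 - a) * h i) - 1 = (a - 1) * h i - 1 by ring]

end Cone

section Polytope

variable {n : Fin m → Fin d → ℤ} {h : Fin m → ℤ} {P : Set (Fin d → ℝ)}

lemma convex_of_eq_setOf_pairing (hPeq : P = {x | ∀ i, pairing (n i) x ≥ -(h i : ℝ)}) :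
    Convex ℝ P := by
  rw [hPeq, ofPred_forall]
  exact convex_iInter fun i => convex_halfSpace_ge ⟨pairing_add _, pairing_smul _⟩ _

lemma mem_smul_iff_mem_coneOver (hPeq : P = {x | ∀ i, pairing (n i) x ≥ -(h i : ℝ)})
    {k : ℝ} (hk : 0 < k) {x : Fin d → ℝ} : x ∈ k • P ↔ (x, k) ∈ coneOver n h := by
  rw [mem_smul_set_iff_inv_smul_mem₀ hk.ne', hPeq]
  refine forall_congr' fun i => ?_
  rw [pairing_smul, ge_iff_le, le_inv_mul_iff₀ hk]
  constructor <;> intro <;> linarith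

lemma mem_interior_smul_iff_mem_intCone
    (hPeq : P = {x | ∀ i, pairing (n i) x ≥ -(h i : ℝ)}) (hn : ∀ i, n i ≠ 0)
    {k : ℝ} (hk : 0 < k) {x : Fin d → ℝ} : x ∈ interior (k • P) ↔ (x, k) ∈ intCone n h := by
  have hslice : k • P = {x | ∀ i, -(k * h i) ≤ pairing (n i) x} :=
    Set.ext fun _ => mem_smul_iff_mem_coneOver hPeq hk
  rw [hslice, interior_setOf_forall_le_pairing hn]
  rfl

lemma eq_zero_of_mem_coneOver_of_nonpos (hPeq : P = {x | ∀ i, pairing (n i) x ≥ -(h i : ℝ)})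
    (hbdd : Bornology.IsBounded P) (hnt : P.Nontrivial) {u : Fin d → ℝ} {t : ℝ}
    (hut : (u, t) ∈ coneOver n h) (ht : t ≤ 0) : u = 0 ∧ t = 0 := by
  -- for `t ≤ 0`, every `u - t • p` with `p ∈ P` is a recession direction of `P`
  have hconst : ∀ p ∈ P, u = t • p := fun p hp => by
    rw [← sub_eq_zero]
    refine eq_zero_of_forall_add_smul_mem hbdd (p := p) fun s hs => ?_
    rw [hPeq] at hp ⊢
    intro i
    have hpi := hp i
    have hui := hut i
    simp only [ge_iff_le, pairing_add, pairing_smul, pairing_sub] at hpi hui ⊢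
    nlinarith [mul_nonneg hs (mul_nonneg (neg_nonneg.mpr ht) (neg_le_iff_add_nonneg.mp hpi))]
  obtain ⟨p₁, hp₁, p₂, hp₂, hne⟩ := hnt
  have ht0 : t = 0 := by
    by_contra ht0
    exact hne (smul_right_injective _ ht0 ((hconst p₁ hp₁).symm.trans (hconst p₂ hp₂)))
  exact ⟨by simpa [ht0] using hconst p₁ hp₁, ht0⟩

lemma pos_of_mem_intCone (hPeq : P = {x | ∀ i, pairing (n i) x ≥ -(h i : ℝ)})
    (hbdd : Bornology.IsBounded P) (hnt : P.Nontrivial) {u : Fin d → ℝ} {t : ℝ}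
    (hut : (u, t) ∈ intCone n h) : 0 < t := by
  by_contra! ht
  obtain ⟨rfl, rfl⟩ := eq_zero_of_mem_coneOver_of_nonpos hPeq hbdd hnt (fun i => (hut i).le) ht
  -- `(0, 0)` lies in the open cone only if there are no facets, and then `(0, -1)` is in the cone
  have hm : IsEmpty (Fin m) := ⟨fun i => by simpa [pairing] using hut i⟩
  have := eq_zero_of_mem_coneOver_of_nonpos hPeq hbdd hnt (u := 0) (t := -1)
    (fun i => hm.elim i) (by norm_num)
  norm_num at this

lemma IsCodegree.le_of_mem_intCone {a : ℕ} (ha : IsCodegree P a)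
    (hPeq : P = {x | ∀ i, pairing (n i) x ≥ -(h i : ℝ)}) (hn : ∀ i, n i ≠ 0)
    {p : Fin d → ℝ} {k : ℝ} (hp : (p, k) ∈ intCone n h ∩ latticePairs d) (hk : 0 < k) :
    (a : ℝ) ≤ k := by
  obtain ⟨hpint, hplat, z, rfl⟩ := hp
  lift z to ℕ using (by exact_mod_cast hk.le)
  push_cast at hk hpint ⊢
  exact_mod_cast ha.2.2 z (by exact_mod_cast hk)
    ⟨p, (mem_interior_smul_iff_mem_intCone hPeq hn hk).2 hpint, hplat⟩

end Polytope

section Decomposition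

variable {n : Fin m → Fin d → ℤ} {h : Fin m → ℤ} {P : Set (Fin d → ℝ)} {a : ℕ}

lemma mem_remPoly_of_mem_antCone {z : Fin d → ℝ}
    (hz : (z, 1 - (a : ℝ)) ∈ antCone n h ∩ latticePairs d) : z ∈ remPoly n h a :=
  subset_convexHull ℝ _ ⟨hz.2.1, mem_antCone_one_sub_iff.mp hz.1⟩

lemma floorPoly_smul_add_remPoly_subset (hPeq : P = {x | ∀ i, pairing (n i) x ≥ -(h i : ℝ)})
    (hn : ∀ i, n i ≠ 0) (ha : 0 < a) : floorPoly ((a : ℝ) • P) + remPoly n h a ⊆ P := by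
  have ha' : (0 : ℝ) < a := by exact_mod_cast ha
  rw [floorPoly, remPoly, ← convexHull_add]
  refine convexHull_min ?_ (convex_of_eq_setOf_pairing hPeq)
  rintro _ ⟨y, ⟨hy, hylat⟩, z, ⟨hzlat, hz⟩, rfl⟩
  have hsum := intCone_inter_latticePairs_add_antCone_subset (add_mem_add
    (⟨(mem_interior_smul_iff_mem_intCone hPeq hn ha').1 hy, hylat, a, rfl⟩ :
      ((y, (a : ℝ)) : _) ∈ intCone n h ∩ latticePairs d)
    (mem_antCone_one_sub_iff.mpr hz))
  simp only [Prod.mk_add_mk, add_sub_cancel] at hsum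
  simpa using (mem_smul_iff_mem_coneOver hPeq one_pos).2 hsum

lemma mem_floorPoly_smul_add_remPoly (hPeq : P = {x | ∀ i, pairing (n i) x ≥ -(h i : ℝ)})
    (hn : ∀ i, n i ≠ 0) (hbdd : Bornology.IsBounded P) (hnt : P.Nontrivial)
    (ha : IsCodegree P a) (hng : NGIncl n h) {x : Fin d → ℝ} (hxP : x ∈ P)
    (hx : x ∈ latticePoints d) : x ∈ floorPoly ((a : ℝ) • P) + remPoly n h a := by
  have ha' : (0 : ℝ) < a := by exact_mod_cast ha.1
  have hx1 : ((x, 1) : (Fin d → ℝ) × ℝ) ∈ coneOver n h ∩ latticePairs d :=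
    ⟨(mem_smul_iff_mem_coneOver hPeq one_pos).1 (by rwa [one_smul]), hx, 1, by norm_num⟩
  obtain ⟨⟨p, k⟩, hp, ⟨q, l⟩, hq, hpq⟩ := hng ⟨hx1, by simp [Prod.ext_iff]⟩
  simp only [Prod.mk_add_mk, Prod.mk.injEq] at hpq
  obtain ⟨rfl, hkl⟩ := hpq
  have hak : (a : ℝ) ≤ k :=
    ha.le_of_mem_intCone hPeq hn hp (pos_of_mem_intCone hPeq hbdd hnt hp.1)
  rcases hak.eq_or_lt with rfl | hlt
  · obtain rfl : l = 1 - a := by linarith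
    exact add_mem_add (subset_convexHull ℝ _ ⟨(mem_interior_smul_iff_mem_intCone hPeq hn ha').2
      hp.1, hp.2.1⟩) (mem_remPoly_of_mem_antCone hq)
  obtain ⟨w, hw, hwlat⟩ := ha.2.1
  have hwa : ((w, (a : ℝ)) : _) ∈ intCone n h ∩ latticePairs d :=
    ⟨(mem_interior_smul_iff_mem_intCone hPeq hn ha').1 hw, hwlat, a, rfl⟩
  have hk : (a : ℝ) + 1 ≤ k := by
    obtain ⟨z, rfl⟩ := hp.2.2
    have : (a : ℤ) < z := by exact_mod_cast hlt
    exact_mod_cast this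
  obtain ⟨hwq, hal⟩ := eq_zero_of_mem_coneOver_of_nonpos hPeq hbdd hnt
    (intCone_inter_latticePairs_add_antCone_subset (add_mem_add hwa hq.1)) (by simp; linarith)
  dsimp only at hwq hal
  have hrem : p + q + q ∈ remPoly n h a := by
    have hsum : ((p + q + q, 1 - (a : ℝ)) : _) = (p + q, 1) + (q, l) := by
      rw [Prod.mk_add_mk, show 1 + l = 1 - a by linarith]
    refine mem_remPoly_of_mem_antCone ?_
    rw [hsum]
    exact ⟨coneOver_add_antCone_subset (add_mem_add hx1.1 hq.1),
      add_mem_latticePairs hx1.2 hq.2⟩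
  have hdecomp : p + q = w + (p + q + q) := by
    rw [eq_neg_of_add_eq_zero_left hwq]
    abel
  rw [hdecomp]
  exact add_mem_add (subset_convexHull ℝ _ ⟨hw, hwlat⟩) hrem

end Decomposition

theorem stmt_2 {d : ℕ} (hd : 1 ≤ d) (P : Set (Fin d → ℝ))
    (hP : IsLatticePolytope P) (hfull : (interior P).Nonempty)
    {m : ℕ} (n : Fin m → Fin d → ℤ) (h : Fin m → ℤ)
    (hpres : IsFacetPresentation P n h)
    (a : ℕ) (ha : IsCodegree P a)
    (hng : NGIncl n h) :
    P = floorPoly ((a : ℝ) • P) + remPoly n h a := by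
  obtain ⟨V, hVlat, hPV⟩ := hP
  obtain ⟨hPeq, hprim, -⟩ := hpres
  have hn : ∀ i, n i ≠ 0 := fun i => ne_zero_of_gcd_eq_one (hprim i)
  have hbdd : Bornology.IsBounded P := hPV ▸ isBounded_convexHull.mpr V.finite_toSet.isBounded
  have : Nonempty (Fin d) := Fin.pos_iff_nonempty.mp hd
  have hnt : P.Nontrivial := Set.nontrivial_of_nonempty_interior hfull
  refine Subset.antisymm ?_ (floorPoly_smul_add_remPoly_subset hPeq hn ha.1)
  refine hPV.subset.trans (convexHull_min (fun v hv => ?_)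
    ((convex_convexHull ℝ _).add (convex_convexHull ℝ _)))
  exact mem_floorPoly_smul_add_remPoly hPeq hn hbdd hnt ha hng
    (hPV ▸ subset_convexHull ℝ _ hv) (hVlat hv)
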